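/- arXiv:1702.08489 — 2 statements merged into one kernel-verified Lean document; each statement's English description precedes it below -/
import Mathlib

section
/- There exists a universal constant d₀ > 0 such that for all integers d ≥ d₀: A_{d²,d}(f) ≥ 1/(5 e π), where f : [−1,1] → ℝ is the function f(x) = sin(π d³ x). -/
open MeasureTheory Real
open scoped RealInnerProductSpace

/-- The probability measure `μ_d` on `[-1,1]` with density
`Γ(d/2)/(√π Γ((d-1)/2)) (1-x²)^((d-3)/2)` w.r.t. Lebesgue measure. -/
noncomputable def muD (d : ℕ) : Measure ℝ :=
  ((volume : Measure ℝ).restrict (Set.Icc (-1 : ℝ) 1)).withDensity fun x =>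
    ENNReal.ofReal (Real.Gamma ((d : ℝ) / 2) / (Real.sqrt π * Real.Gamma (((d : ℝ) - 1) / 2)) *
      (1 - x ^ 2) ^ (((d : ℝ) - 3) / 2))

/-- `A_{n,d}(f)`: the best `L²(μ_d)` approximation error of `f` by polynomials
of degree at most `n-1`. -/
noncomputable def polyApproxErr (n d : ℕ) (f : ℝ → ℝ) : ℝ :=
  sInf {c | ∃ p : Polynomial ℝ, p.natDegree ≤ n - 1 ∧
    c = Real.sqrt (∫ x, (f x - p.eval x) ^ 2 ∂ muD d)}

/-- `N_{d,n} = C(d+n-1, d-1) - C(d+n-3, d-1)`. -/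
def NDN (d n : ℕ) : ℕ := (d + n - 1).choose (d - 1) - (d + n - 3).choose (d - 1)

/-- The unit sphere `S^{d-1} ⊆ ℝ^d`. -/
abbrev Sph (d : ℕ) := Metric.sphere (0 : EuclideanSpace ℝ (Fin d)) 1

/-- The uniform (rotation-invariant) probability measure on `S^{d-1}`. -/
noncomputable def uniformSphere (d : ℕ) : Measure (Sph d) :=
  ((volume : Measure (EuclideanSpace ℝ (Fin d))).toSphere Set.univ)⁻¹ •
    (volume : Measure (EuclideanSpace ℝ (Fin d))).toSphere

/-- `N` is implemented by a depth-2 `σ`-network of width `r` with weights bounded by `B`: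
`N(x,x') = w₂ᵀ σ(W₁ x + W₁' x' + b₁) + b₂`. -/
def IsDepth2Net (d r : ℕ) (B : ℝ) (σ : ℝ → ℝ) (N : Sph d → Sph d → ℝ) : Prop :=
  ∃ (W₁ W₁' : Matrix (Fin r) (Fin d) ℝ) (w₂ b₁ : Fin r → ℝ) (b₂ : ℝ),
    (∀ i j, |W₁ i j| ≤ B) ∧ (∀ i j, |W₁' i j| ≤ B) ∧ (∀ i, |w₂ i| ≤ B) ∧
    (∀ i, |b₁ i| ≤ B) ∧ |b₂| ≤ B ∧
    ∀ x x' : Sph d, N x x' =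
      (∑ i, w₂ i * σ ((∑ j, W₁ i j * (x : EuclideanSpace ℝ (Fin d)) j) +
        (∑ j, W₁' i j * (x' : EuclideanSpace ℝ (Fin d)) j) + b₁ i)) + b₂

/-!
On each period `[2k/N, 2(k+1)/N]` of `x ↦ sin (π N x)`, `N = d³`, either `p` is positive somewhere
on the quarter-window where `sin ≥ √2/2` and negative somewhere on the one where `sin ≤ -√2/2`,
which forces a root of `p` in that period, or `(sin (π N x) - p x)² ≥ 1/2` on a window of
length `1/(2N)`. So all but at most `deg p < d²` periods contribute `1/(4N)` each to the error.
The density of `μ_d` is at least `√d/(4√π)` on `[0, d^(-1/2)]` (Gautschi's inequality for the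
normalising constant, Bernoulli's for `(1-x²)^((d-3)/2)`), and this interval holds about
`d^(5/2)/2` periods, so the squared error is at least
`√d/(4√π) · (d^(5/2)/2 - d²)/(4d³) ≥ 1/128` once `d ≥ 16`.
-/

open Set Polynomial

theorem Polynomial.card_le_natDegree_of_pairwiseDisjoint {R ι : Type*} [CommRing R] [IsDomain R]
    (p : R[X]) {s : Finset ι} {I : ι → Set R} (hI : (s : Set ι).PairwiseDisjoint I)
    (hroot : ∀ i ∈ s, ∃ x ∈ I i, x ∈ p.roots) : s.card ≤ p.natDegree := by
  classical
  choose! r hrI hr using hroot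
  calc s.card ≤ p.roots.toFinset.card :=
        Finset.card_le_card_of_injOn r (fun i hi => by simpa using hr i hi)
          fun i hi j hj hij => hI.elim hi hj <| not_disjoint_iff.2 ⟨r i, hrI i hi, hij ▸ hrI j hj⟩
    _ ≤ Multiset.card p.roots := p.roots.toFinset_card_le
    _ ≤ p.natDegree := p.card_roots'

theorem sqrt_two_div_two_le_sin_pi_mul {t : ℝ} (k : ℤ)
    (ht : t ∈ Icc (2 * (k : ℝ) + 1 / 4) (2 * k + 3 / 4)) :
    √2 / 2 ≤ sin (π * t) := by
  have hθ : π * t - k * (2 * π) - π / 2 ∈ Icc (-(π / 4)) (π / 4) := by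
    constructor <;> nlinarith [ht.1, ht.2, pi_pos]
  rw [← sin_sub_int_mul_two_pi, ← cos_sub_pi_div_two, ← cos_abs, ← cos_pi_div_four]
  exact cos_le_cos_of_nonneg_of_le_pi (abs_nonneg _) (by linarith [pi_pos]) (abs_le.2 hθ)

theorem sqrt_two_div_two_le_neg_sin_pi_mul {t : ℝ} (k : ℤ)
    (ht : t ∈ Icc (2 * (k : ℝ) + 5 / 4) (2 * k + 7 / 4)) :
    √2 / 2 ≤ -sin (π * t) := by
  rw [← sin_sub_pi, ← mul_sub_one]
  exact sqrt_two_div_two_le_sin_pi_mul k ⟨by linarith [ht.1], by linarith [ht.2]⟩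

theorem Real.sqrt_mul_Gamma_add_half_le_Gamma_add_one {s : ℝ} (hs : 0 < s) :
    √s * Gamma (s + 1 / 2) ≤ Gamma (s + 1) := by
  have hΓ : 0 < Gamma s := Gamma_pos_of_pos hs
  have hconv := Gamma_mul_add_mul_le_rpow_Gamma_mul_rpow_Gamma hs (by linarith : 0 < s + 1)
    (by norm_num : (0:ℝ) < 1 / 2) (by norm_num : (0:ℝ) < 1 / 2) (by norm_num)
  rw [show 1 / 2 * s + 1 / 2 * (s + 1) = s + 1 / 2 by ring,
    ← mul_rpow hΓ.le (Gamma_pos_of_pos (by linarith)).le, ← sqrt_eq_rpow,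
    Gamma_add_one hs.ne'] at hconv
  calc √s * Gamma (s + 1 / 2) ≤ √s * √(Gamma s * (s * Gamma s)) := by gcongr
    _ = Gamma (s + 1) := by
      rw [Gamma_add_one hs.ne', ← sqrt_mul hs.le,
        show s * (Gamma s * (s * Gamma s)) = (s * Gamma s) ^ 2 by ring, sqrt_sq (by positivity)]

theorem intervalIntegral.mul_sub_le_integral_of_le_on {f : ℝ → ℝ} {a b l r c : ℝ}
    (hal : a ≤ l) (hlr : l ≤ r) (hrb : r ≤ b) (hf : IntervalIntegrable f volume a b)
    (hf0 : ∀ x ∈ Icc a b, 0 ≤ f x) (hc : ∀ x ∈ Icc l r, c ≤ f x) :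
    c * (r - l) ≤ ∫ x in a..b, f x := by
  have hflr : IntervalIntegrable f volume l r :=
    hf.mono_set <|
      uIcc_subset_uIcc (mem_uIcc_of_le hal (hlr.trans hrb)) (mem_uIcc_of_le (hal.trans hlr) hrb)
  calc c * (r - l) = ∫ _ in l..r, c := by simp [mul_comm]
    _ ≤ ∫ x in l..r, f x := intervalIntegral.integral_mono_on hlr intervalIntegrable_const hflr hc
    _ ≤ ∫ x in a..b, f x := intervalIntegral.integral_mono_interval hal hlr hrb
        ((ae_restrict_mem measurableSet_Ioc).mono fun x hx => hf0 x (Ioc_subset_Icc_self hx)) hf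

section SinePeriod

variable {N : ℝ}

theorem one_div_four_mul_le_integral_sq_sin_sub (hN : 0 < N) {f : ℝ → ℝ} (hf : Continuous f) (k : ℤ)
    (h : (∀ x ∈ Icc ((2 * k + 1 / 4) / N) ((2 * k + 3 / 4) / N), f x ≤ 0) ∨
      (∀ x ∈ Icc ((2 * k + 5 / 4) / N) ((2 * k + 7 / 4) / N), 0 ≤ f x)) :
    1 / (4 * N) ≤ ∫ x in 2 * k / N..2 * (k + 1) / N, (sin (π * N * x) - f x) ^ 2 := by
  have hsq : ∀ u : ℝ, √2 / 2 ≤ |u| → 1 / 2 ≤ u ^ 2 := fun u hu => by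
    calc 1 / 2 = (√2 / 2) ^ 2 := by rw [div_pow, sq_sqrt zero_le_two]; norm_num
      _ ≤ |u| ^ 2 := by gcongr
      _ = u ^ 2 := sq_abs u
  have hNx : ∀ {x a b : ℝ}, x ∈ Icc (a / N) (b / N) → N * x ∈ Icc a b := fun hx =>
    ⟨by rw [← div_le_iff₀' hN]; exact hx.1, by rw [← le_div_iff₀' hN]; exact hx.2⟩
  have hint : IntervalIntegrable (fun x => (sin (π * N * x) - f x) ^ 2) volume
      (2 * k / N) (2 * (k + 1) / N) :=
    (by fun_prop : Continuous fun x => (sin (π * N * x) - f x) ^ 2).intervalIntegrable _ _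
  have hwindow : ∀ l r : ℝ, 2 * k ≤ l → r = l + 1 / 2 → r ≤ 2 * (k + 1) →
      (∀ x ∈ Icc (l / N) (r / N), √2 / 2 ≤ |sin (π * N * x) - f x|) →
      1 / (4 * N) ≤ ∫ x in 2 * k / N..2 * (k + 1) / N, (sin (π * N * x) - f x) ^ 2 := by
    rintro l r hl rfl hr hsin
    calc 1 / (4 * N) = 1 / 2 * ((l + 1 / 2) / N - l / N) := by field_simp; ring
      _ ≤ _ := intervalIntegral.mul_sub_le_integral_of_le_on (by gcongr) (by gcongr; norm_num)
        (by gcongr) hint (fun x _ => sq_nonneg _) fun x hx => hsq _ (hsin x hx)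
  rcases h with h | h
  · refine hwindow (2 * k + 1 / 4) (2 * k + 3 / 4) (by linarith) (by ring) (by linarith)
      fun x hx => le_abs.2 (Or.inl ?_)
    have hs := sqrt_two_div_two_le_sin_pi_mul k (hNx hx)
    rw [← mul_assoc] at hs
    linarith [h x hx]
  · refine hwindow (2 * k + 5 / 4) (2 * k + 7 / 4) (by linarith) (by ring) (by linarith)
      fun x hx => le_abs.2 (Or.inr ?_)
    have hs := sqrt_two_div_two_le_neg_sin_pi_mul k (hNx hx)
    rw [← mul_assoc] at hs
    linarith [h x hx]

theorem sub_natDegree_div_le_integral_sq_sin_sub_eval (hN : 0 < N) (p : ℝ[X]) (m : ℕ) :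
    ((m : ℝ) - p.natDegree) / (4 * N) ≤
      ∫ x in (0 : ℝ)..2 * m / N, (sin (π * N * x) - p.eval x) ^ 2 := by
  classical
  set a : ℕ → ℝ := fun k => 2 * k / N
  have ha : Monotone a := fun i j hij => by dsimp only [a]; gcongr
  -- `P k`: `p` changes sign from `+` to `-` between the two windows of the `k`-th period.
  set P : ℕ → Prop := fun k =>
    (∃ x ∈ Icc ((2 * k + 1 / 4) / N) ((2 * k + 3 / 4) / N), 0 < p.eval x) ∧
      ∃ y ∈ Icc ((2 * k + 5 / 4) / N) ((2 * k + 7 / 4) / N), p.eval y < 0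
  have hroot : ∀ k, P k → ∃ z ∈ Ioo (a k) (a (k + 1)), z ∈ p.roots := by
    rintro k ⟨⟨x, hx, hpx⟩, y, hy, hpy⟩
    have hxy : x < y :=
      hx.2.trans_lt <| (div_lt_div_iff_of_pos_right hN).2 (by linarith) |>.trans_le hy.1
    obtain ⟨z, hz, hpz⟩ := intermediate_value_Ioo' hxy.le p.continuous.continuousOn ⟨hpy, hpx⟩
    refine ⟨z, ⟨?_, ?_⟩, (mem_roots').2 ⟨fun h => by simp [h] at hpx, hpz⟩⟩
    · calc a k < (2 * k + 1 / 4) / N := by dsimp only [a]; gcongr; linarith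
        _ < z := hx.1.trans_lt hz.1
    · calc z < (2 * k + 7 / 4) / N := hz.2.trans_le hy.2
        _ < a (k + 1) := by dsimp only [a]; push_cast; gcongr; linarith
  have hcount : ((Finset.range m).filter P).card ≤ p.natDegree :=
    p.card_le_natDegree_of_pairwiseDisjoint
      (fun i _ j _ hij => ha.pairwise_disjoint_on_Ioo_succ hij)
      fun k hk => hroot k (Finset.mem_filter.1 hk).2
  have hperiod : ∀ k, 1 / (4 * N) ≤ (∫ x in a k..a (k + 1), (sin (π * N * x) - p.eval x) ^ 2) +
      if P k then 1 / (4 * N) else 0 := by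
    intro k
    split_ifs with hk
    · have : 0 ≤ ∫ x in a k..a (k + 1), (sin (π * N * x) - p.eval x) ^ 2 :=
        intervalIntegral.integral_nonneg (ha k.le_succ) fun _ _ => sq_nonneg _
      linarith
    · rw [not_and_or] at hk
      push Not at hk
      have := one_div_four_mul_le_integral_sq_sin_sub hN p.continuous k (by push_cast; exact hk)
      simpa [a] using this
  calc ((m : ℝ) - p.natDegree) / (4 * N)
      ≤ ∑ k ∈ Finset.range m, (1 / (4 * N) - if P k then 1 / (4 * N) else 0) := by
        rw [Finset.sum_sub_distrib, ← Finset.sum_filter]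
        simp only [Finset.sum_const, Finset.card_range, nsmul_eq_mul]
        have hcard : (((Finset.range m).filter P).card : ℝ) ≤ p.natDegree := by
          exact_mod_cast hcount
        rw [← sub_mul, div_eq_mul_one_div]
        exact mul_le_mul_of_nonneg_right (by linarith) (by positivity)
    _ ≤ ∑ k ∈ Finset.range m, ∫ x in a k..a (k + 1), (sin (π * N * x) - p.eval x) ^ 2 :=
        Finset.sum_le_sum fun k _ => by linarith [hperiod k]
    _ = ∫ x in (0 : ℝ)..2 * m / N, (sin (π * N * x) - p.eval x) ^ 2 := by
        rw [intervalIntegral.sum_integral_adjacent_intervals fun k _ => (by fun_prop : Continuous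
          fun x => (sin (π * N * x) - p.eval x) ^ 2).intervalIntegrable _ _]
        simp [a]

end SinePeriod

noncomputable def muDDensity (d : ℕ) (x : ℝ) : ℝ :=
  Gamma ((d : ℝ) / 2) / (√π * Gamma (((d : ℝ) - 1) / 2)) * (1 - x ^ 2) ^ (((d : ℝ) - 3) / 2)

theorem muD_eq_withDensity (d : ℕ) :
    muD d = (volume.restrict (Icc (-1) 1)).withDensity fun x => ENNReal.ofReal (muDDensity d x) :=
  rfl

theorem continuous_muDDensity {d : ℕ} (hd : 3 ≤ d) : Continuous (muDDensity d) := by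
  have : (0 : ℝ) ≤ ((d : ℝ) - 3) / 2 := by
    have : (3 : ℝ) ≤ d := by exact_mod_cast hd
    linarith
  unfold muDDensity
  fun_prop (disch := exact this)

theorem sqrt_div_le_muDDensity {d : ℕ} (hd : 5 ≤ d) {x : ℝ} (hx : x ^ 2 ≤ 1 / d) :
    √d / (4 * √π) ≤ muDDensity d x := by
  have hd' : (5 : ℝ) ≤ d := by exact_mod_cast hd
  have hΓ : √d / 2 ≤ Gamma ((d : ℝ) / 2) / Gamma (((d : ℝ) - 1) / 2) := by
    have hG := sqrt_mul_Gamma_add_half_le_Gamma_add_one (s := (d : ℝ) / 2 - 1) (by linarith)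
    rw [show (d : ℝ) / 2 - 1 + 1 / 2 = ((d : ℝ) - 1) / 2 by ring,
      show (d : ℝ) / 2 - 1 + 1 = (d : ℝ) / 2 by ring] at hG
    have hsqrt : √d / 2 ≤ √((d : ℝ) / 2 - 1) := by
      rw [le_sqrt (by positivity) (by linarith), div_pow, sq_sqrt (by linarith)]
      linarith
    rw [le_div_iff₀ (Gamma_pos_of_pos (by linarith))]
    exact (mul_le_mul_of_nonneg_right hsqrt (Gamma_pos_of_pos (by linarith)).le).trans hG
  have hpow : 1 / 2 ≤ (1 - x ^ 2) ^ (((d : ℝ) - 3) / 2) := by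
    have hx1 : x ^ 2 ≤ 1 := hx.trans (by rw [div_le_one (by linarith)]; linarith)
    have := one_add_mul_self_le_rpow_one_add (s := -x ^ 2) (by linarith) (p := ((d : ℝ) - 3) / 2)
      (by linarith)
    rw [← sub_eq_add_neg] at this
    refine le_trans ?_ this
    rw [le_div_iff₀ (by linarith)] at hx
    nlinarith
  calc √d / (4 * √π) = √d / 2 / √π * (1 / 2) := by ring
    _ ≤ Gamma ((d : ℝ) / 2) / Gamma (((d : ℝ) - 1) / 2) / √π *
          (1 - x ^ 2) ^ (((d : ℝ) - 3) / 2) := by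
      have := Gamma_pos_of_pos (s := (d : ℝ) / 2) (by linarith)
      have := Gamma_pos_of_pos (s := ((d : ℝ) - 1) / 2) (by linarith)
      gcongr
    _ = muDDensity d x := by unfold muDDensity; ring

theorem mul_setIntegral_le_integral_muD {d : ℕ} (hd : 3 ≤ d) {S : Set ℝ} (hS : MeasurableSet S)
    (hSI : S ⊆ Icc (-1) 1) {K : ℝ} (hK : ∀ x ∈ S, K ≤ muDDensity d x) {g : ℝ → ℝ}
    (hg : ContinuousOn g (Icc (-1) 1)) (hg0 : ∀ x ∈ Icc (-1) 1, 0 ≤ g x) :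
    K * ∫ x in S, g x ≤ ∫ x, g x ∂muD d := by
  have hρ := continuous_muDDensity hd
  set ρ : ℝ → ℝ := fun x => max (muDDensity d x) 0
  have hint : IntegrableOn (fun x => ρ x * g x) (Icc (-1) 1) :=
    ((hρ.max continuous_const).continuousOn.mul hg).integrableOn_Icc
  rw [muD_eq_withDensity, integral_withDensity_eq_integral_toReal_smul
    hρ.measurable.ennreal_ofReal (ae_of_all _ fun _ => ENNReal.ofReal_lt_top)]
  simp_rw [ENNReal.toReal_ofReal', smul_eq_mul]
  calc K * ∫ x in S, g x = ∫ x in S, K * g x := (integral_const_mul K g).symm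
    _ ≤ ∫ x in S, ρ x * g x :=
      setIntegral_mono_on ((hg.integrableOn_Icc.mono_set hSI).const_mul K) (hint.mono_set hSI) hS
        fun x hx => mul_le_mul_of_nonneg_right ((hK x hx).trans (le_max_left _ _)) (hg0 x (hSI hx))
    _ ≤ ∫ x in Icc (-1) 1, ρ x * g x :=
      setIntegral_mono_set hint
        ((ae_restrict_mem measurableSet_Icc).mono fun x hx =>
          mul_nonneg (le_max_right _ _) (hg0 x hx))
        hSI.eventuallyLE

theorem one_div_le_integral_muD_sq_sin_sub_eval {d : ℕ} (hd : 16 ≤ d) {p : ℝ[X]}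
    (hp : p.natDegree < d ^ 2) :
    1 / 128 ≤ ∫ x, (sin (π * d ^ 3 * x) - p.eval x) ^ 2 ∂muD d := by
  set r := √(d : ℝ)
  have hr : 4 ≤ r := by
    rw [le_sqrt (by norm_num) (by positivity)]
    exact_mod_cast (show 4 ^ 2 ≤ d by omega)
  have hrd : (d : ℝ) = r ^ 2 := (sq_sqrt (Nat.cast_nonneg d)).symm
  have hd3 : (d : ℝ) ^ 3 = r ^ 6 := by rw [hrd]; ring
  set m := ⌊r ^ 5 / 2⌋₊
  have hm_lo : r ^ 5 / 2 - 1 < m := Nat.sub_one_lt_floor _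
  have hm_hi : (m : ℝ) ≤ r ^ 5 / 2 := Nat.floor_le (by positivity)
  have hdeg : (p.natDegree : ℝ) + 1 ≤ r ^ 4 := by
    rw [show r ^ 4 = (d : ℝ) ^ 2 by rw [hrd]; ring]
    exact_mod_cast hp
  set T := 2 * (m : ℝ) / d ^ 3
  have hT0 : 0 ≤ T := by positivity
  have hT : T ≤ 1 / r := by
    rw [show T = 2 * m / r ^ 6 by rw [← hd3], div_le_div_iff₀ (by positivity) (by positivity)]
    nlinarith
  have hr1 : 1 / r ≤ 1 := by rw [div_le_one (by positivity)]; linarith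
  have hdens : ∀ x ∈ Ioc 0 T, √d / (4 * √π) ≤ muDDensity d x := fun x hx =>
    sqrt_div_le_muDDensity (by omega) <| by
      rw [hrd, one_div, ← inv_pow, ← one_div]
      exact pow_le_pow_left₀ hx.1.le (hx.2.trans hT) 2
  have hπ : √π ≤ 2 := (sqrt_le_left zero_le_two).2 (by linarith [pi_lt_four])
  calc (1 : ℝ) / 128 ≤ r / (4 * √π) * ((r ^ 5 / 2 - r ^ 4) / (4 * r ^ 6)) := by
        rw [show r / (4 * √π) * ((r ^ 5 / 2 - r ^ 4) / (4 * r ^ 6)) =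
            (1 / 2 - 1 / r) / (16 * √π) by field_simp; ring, le_div_iff₀ (by positivity)]
        have : 1 / r ≤ 1 / 4 := by gcongr
        linarith
    _ ≤ √d / (4 * √π) * ((m - p.natDegree) / (4 * d ^ 3)) := by
        rw [hd3]
        gcongr ?_ * (?_ / _)
        linarith
    _ ≤ √d / (4 * √π) * ∫ x in (0 : ℝ)..T, (sin (π * d ^ 3 * x) - p.eval x) ^ 2 := by
        gcongr
        exact sub_natDegree_div_le_integral_sq_sin_sub_eval (by positivity) p m
    _ = √d / (4 * √π) * ∫ x in Ioc 0 T, (sin (π * d ^ 3 * x) - p.eval x) ^ 2 := by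
        rw [intervalIntegral.integral_of_le hT0]
    _ ≤ ∫ x, (sin (π * d ^ 3 * x) - p.eval x) ^ 2 ∂muD d :=
        mul_setIntegral_le_integral_muD (by omega) measurableSet_Ioc
          (Ioc_subset_Icc_self.trans (Icc_subset_Icc (by norm_num) (hT.trans hr1))) hdens
          (by fun_prop : Continuous fun x => (sin (π * d ^ 3 * x) - p.eval x) ^ 2).continuousOn
          fun x _ => sq_nonneg _

/-- For large enough `d`, the best approximation of `x ↦ sin(π d³ x)` by
polynomials of degree at most `d² - 1` in `L²(μ_d)` is at least `1/(5 e π)`. -/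
theorem sine_polyApproxErr_lower_bound :
    ∃ d₀ : ℕ, 0 < d₀ ∧ ∀ d : ℕ, d₀ ≤ d →
      polyApproxErr (d ^ 2) d (fun x => Real.sin (π * (d : ℝ) ^ 3 * x)) ≥
        1 / (5 * Real.exp 1 * π) := by
  refine ⟨16, by norm_num, fun d hd => le_csInf ⟨_, 0, by simp, rfl⟩ ?_⟩
  rintro _ ⟨p, hp, rfl⟩
  have hdeg : p.natDegree < d ^ 2 := by
    have : 0 < d ^ 2 := by positivity
    omega
  rw [le_sqrt (by positivity) (integral_nonneg fun x => sq_nonneg _)]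
  refine le_trans ?_ (one_div_le_integral_muD_sq_sin_sub_eval hd hdeg)
  rw [div_pow, one_pow, one_div_le_one_div (by positivity) (by norm_num)]
  have : 6 < exp 1 * π := by nlinarith [exp_one_gt_two, pi_gt_three]
  nlinarith
end

section
/- Let d ≥ 1 and δ > 0. There exists a function N : S^{d−1} × S^{d−1} → ℝ implemented by a depth-2 ReLU network of width at most 8d²/δ with weights bounded by 4 such that |N(x,x') − ⟨x,x'⟩| ≤ δ for all x, x' ∈ S^{d−1}. -/
/-!
Since `x * y = ((x + y) ^ 2 - (x - y) ^ 2) / 4`, it suffices to approximate `s ↦ s ^ 2` uniformly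
on `[-2, 2]`. Its piecewise-linear interpolant at `m + 1` equally spaced knots is a combination of
`m` ReLUs and exceeds `s ^ 2` by at most `(4 / m) ^ 2 / 4`, so each coordinate product costs `2 * m`
units with error `1 / m ^ 2`. Summing over the `d` coordinates with `m = ⌈d / δ⌉ + 1` gives width
`2 * d * m ≤ 8 * d ^ 2 / δ` and error `d / m ^ 2 ≤ δ`; for `δ ≥ 1` the zero network already works.
-/

open MeasureTheory Real
open scoped RealInnerProductSpace

open Finset

/-- `a ^ 2 + sqInterpRelu a h n` is the piecewise-linear interpolant of `s ↦ s ^ 2` at the knots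
`a + k * h`, `k ≤ n`: its slope is `2 * a + h` on the first piece and grows by `2 * h` at each
further knot. -/
noncomputable def sqInterpCoeff (a h : ℝ) (k : ℕ) : ℝ := if k = 0 then 2 * a + h else 2 * h

noncomputable def sqInterpRelu (a h : ℝ) (n : ℕ) (s : ℝ) : ℝ :=
  ∑ k ∈ range n, sqInterpCoeff a h k * max 0 (s - (a + k * h))

lemma sum_range_succ_sqInterpCoeff_mul (a h s : ℝ) (j : ℕ) :
    ∑ k ∈ range (j + 1), sqInterpCoeff a h k * (s - (a + k * h)) =
      (s - a) * ((2 * j + 1) * h + 2 * a) - j * (j + 1) * h ^ 2 := by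
  induction j with
  | zero => rw [sum_range_one, sqInterpCoeff, if_pos rfl]; push_cast; ring
  | succ j ih =>
    rw [sum_range_succ, ih, sqInterpCoeff, if_neg j.succ_ne_zero]
    push_cast
    ring

lemma sq_add_sqInterpRelu_sub_sq {a h s : ℝ} {j n : ℕ} (hh : 0 ≤ h) (hj : j < n)
    (hs : s ∈ Set.Icc (a + j * h) (a + (j + 1) * h)) :
    a ^ 2 + sqInterpRelu a h n s - s ^ 2 = (s - (a + j * h)) * (a + (j + 1) * h - s) := by
  have hactive : ∀ k ∈ range (j + 1), max 0 (s - (a + k * h)) = s - (a + k * h) := by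
    intro k hk
    have : (k : ℝ) ≤ j := by exact_mod_cast Nat.lt_succ_iff.mp (mem_range.mp hk)
    exact max_eq_right (by nlinarith [hs.1])
  have hinactive : ∀ k ∈ Ico (j + 1) n, max 0 (s - (a + k * h)) = 0 := by
    intro k hk
    have : (j : ℝ) + 1 ≤ k := by exact_mod_cast (mem_Ico.mp hk).1
    exact max_eq_left (by nlinarith [hs.2])
  have hsplit : sqInterpRelu a h n s =
      ∑ k ∈ range (j + 1), sqInterpCoeff a h k * (s - (a + k * h)) := by
    have hzero : ∑ k ∈ Ico (j + 1) n, sqInterpCoeff a h k * max 0 (s - (a + k * h)) = 0 :=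
      sum_eq_zero fun k hk => by rw [hinactive k hk, mul_zero]
    rw [sqInterpRelu, ← sum_range_add_sum_Ico _ hj, hzero, add_zero]
    exact sum_congr rfl fun k hk => by rw [hactive k hk]
  rw [hsplit, sum_range_succ_sqInterpCoeff_mul]
  ring

lemma exists_knot_interval {a h s : ℝ} (n : ℕ) (hs : s ∈ Set.Icc a (a + (n + 1) * h)) :
    ∃ j ≤ n, s ∈ Set.Icc (a + j * h) (a + (j + 1) * h) := by
  induction n with
  | zero => exact ⟨0, le_rfl, by simpa using hs⟩
  | succ n ih =>
    by_cases hsn : s ≤ a + (n + 1) * h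
    · obtain ⟨j, hjn, hj⟩ := ih ⟨hs.1, hsn⟩
      exact ⟨j, hjn.trans n.le_succ, hj⟩
    · refine ⟨n + 1, le_rfl, ?_, ?_⟩ <;> push_cast at hs ⊢ <;> linarith [hs.2]

lemma sqInterpRelu_error_mem_Icc {a h s : ℝ} {n : ℕ} (hh : 0 ≤ h) (hn : 0 < n)
    (hs : s ∈ Set.Icc a (a + n * h)) :
    a ^ 2 + sqInterpRelu a h n s - s ^ 2 ∈ Set.Icc 0 (h ^ 2 / 4) := by
  obtain ⟨n, rfl⟩ := Nat.exists_eq_add_one_of_ne_zero hn.ne'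
  obtain ⟨j, hjn, hj⟩ := exists_knot_interval n (by exact_mod_cast hs)
  rw [sq_add_sqInterpRelu_sub_sq hh (Nat.lt_succ_of_le hjn) hj]
  obtain ⟨hlo, hhi⟩ := hj
  constructor
  · exact mul_nonneg (by linarith) (by linarith)
  · nlinarith [sq_nonneg ((s - (a + j * h)) - (a + (j + 1) * h - s))]

noncomputable def sqApprox (m : ℕ) : ℝ → ℝ := sqInterpRelu (-2) (4 / m) m

lemma sqApprox_error_mem_Icc {m : ℕ} (hm : 0 < m) {s : ℝ} (hs : s ∈ Set.Icc (-2) 2) :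
    4 + sqApprox m s - s ^ 2 ∈ Set.Icc 0 (4 / (m : ℝ) ^ 2) := by
  have hm' : (m : ℝ) ≠ 0 := by positivity
  have h := sqInterpRelu_error_mem_Icc (a := -2) (h := 4 / m) (by positivity) hm
    (by rwa [mul_div_cancel₀ _ hm', show (-2 : ℝ) + 4 = 2 by norm_num])
  convert h using 2
  · ring
  · norm_num [sqApprox]

lemma abs_sqApprox_sub_sqApprox_div_four_sub_mul_le {m : ℕ} (hm : 0 < m) {x y : ℝ}
    (hx : |x| ≤ 1) (hy : |y| ≤ 1) :
    |(sqApprox m (x + y) - sqApprox m (x - y)) / 4 - x * y| ≤ 1 / (m : ℝ) ^ 2 := by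
  obtain ⟨hx₁, hx₂⟩ := abs_le.mp hx
  obtain ⟨hy₁, hy₂⟩ := abs_le.mp hy
  have hadd := sqApprox_error_mem_Icc hm (s := x + y) ⟨by linarith, by linarith⟩
  have hsub := sqApprox_error_mem_Icc hm (s := x - y) ⟨by linarith, by linarith⟩
  have hm4 : (4 : ℝ) / (m : ℝ) ^ 2 = 4 * (1 / (m : ℝ) ^ 2) := by ring
  rw [hm4] at hadd hsub
  rw [abs_le]
  constructor <;> linarith [hadd.1, hadd.2, hsub.1, hsub.2]

lemma abs_sqInterpCoeff_le {m : ℕ} (hm : 0 < m) (k : ℕ) :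
    |sqInterpCoeff (-2) (4 / m) k| ≤ 8 := by
  have hpos : 0 < (4 : ℝ) / m := by positivity
  have hle : (4 : ℝ) / m ≤ 4 := div_le_self (by norm_num) (by exact_mod_cast hm)
  rw [sqInterpCoeff]
  split_ifs <;> rw [abs_le] <;> constructor <;> linarith

lemma abs_knot_le {m k : ℕ} (hk : k < m) : |-2 + k * (4 / m : ℝ)| ≤ 2 := by
  have hm : (m : ℝ) ≠ 0 := Nat.cast_ne_zero.mpr (Nat.ne_zero_of_lt hk)
  have hpos : 0 ≤ k * (4 / m : ℝ) := by positivity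
  have hle : k * (4 / m : ℝ) ≤ 4 :=
    calc k * (4 / m : ℝ) ≤ m * (4 / m) := by gcongr
      _ = 4 := mul_div_cancel₀ _ hm
  rw [abs_le]
  constructor <;> linarith

noncomputable def innerApprox {ι : Type*} [Fintype ι] (m : ℕ) (x y : EuclideanSpace ℝ ι) : ℝ :=
  ∑ i, (sqApprox m (x i + y i) - sqApprox m (x i - y i)) / 4

lemma abs_innerApprox_sub_inner_le {ι : Type*} [Fintype ι] {m : ℕ} (hm : 0 < m)
    {x y : EuclideanSpace ℝ ι} (hx : ‖x‖ ≤ 1) (hy : ‖y‖ ≤ 1) :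
    |innerApprox m x y - ⟪x, y⟫| ≤ Fintype.card ι / (m : ℝ) ^ 2 := by
  have hcoord : ∀ (z : EuclideanSpace ℝ ι), ‖z‖ ≤ 1 → ∀ i, |z i| ≤ 1 := fun z hz i =>
    (Real.norm_eq_abs (z i) ▸ PiLp.norm_apply_le z i).trans hz
  have hinner : ⟪x, y⟫ = ∑ i, x i * y i := by simp [PiLp.inner_apply, mul_comm]
  calc |innerApprox m x y - ⟪x, y⟫|
      = |∑ i, ((sqApprox m (x i + y i) - sqApprox m (x i - y i)) / 4 - x i * y i)| := by
        rw [innerApprox, hinner, sum_sub_distrib]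
    _ ≤ ∑ i, |(sqApprox m (x i + y i) - sqApprox m (x i - y i)) / 4 - x i * y i| :=
        abs_sum_le_sum_abs _ _
    _ ≤ ∑ _i : ι, 1 / (m : ℝ) ^ 2 := sum_le_sum fun i _ =>
        abs_sqApprox_sub_sqApprox_div_four_sub_mul_le hm (hcoord x hx i) (hcoord y hy i)
    _ = Fintype.card ι / (m : ℝ) ^ 2 := by simp [div_eq_mul_inv]

lemma IsDepth2Net.of_sum {ι : Type*} [Fintype ι] {d r : ℕ} {B : ℝ} {σ : ℝ → ℝ}
    {N : Sph d → Sph d → ℝ} (hr : Fintype.card ι = r) (W W' : ι → Fin d → ℝ) (w b : ι → ℝ)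
    (hB : 0 ≤ B) (hW : ∀ i j, |W i j| ≤ B) (hW' : ∀ i j, |W' i j| ≤ B) (hw : ∀ i, |w i| ≤ B)
    (hb : ∀ i, |b i| ≤ B)
    (hN : ∀ x x' : Sph d, N x x' = ∑ i, w i * σ ((∑ j, W i j * (x : EuclideanSpace ℝ (Fin d)) j) +
        (∑ j, W' i j * (x' : EuclideanSpace ℝ (Fin d)) j) + b i)) :
    IsDepth2Net d r B σ N := by
  subst hr
  set e := Fintype.equivFin ι
  refine ⟨fun k => W (e.symm k), fun k => W' (e.symm k), fun k => w (e.symm k),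
    fun k => b (e.symm k), 0, fun k => hW _, fun k => hW' _, fun k => hw _, fun k => hb _,
    by simpa using hB, fun x x' => ?_⟩
  rw [hN, add_zero]
  exact (e.symm.sum_comp _).symm

lemma isDepth2Net_innerApprox (d : ℕ) {m : ℕ} (hm : 0 < m) :
    IsDepth2Net d (d * (m * 2)) 4 (fun x => max 0 x)
      (fun x x' => innerApprox m (x : EuclideanSpace ℝ (Fin d)) x') := by
  -- the unit `(j, k, t)` is the `k`-th ReLU of `sqApprox m` evaluated at `x j ± x' j`
  let sign : Fin 2 → ℝ := ![1, -1]
  have hsign : ∀ t, |sign t| = 1 := by intro t; fin_cases t <;> simp [sign]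
  refine IsDepth2Net.of_sum (ι := Fin d × Fin m × Fin 2) (by simp)
    (fun i => Pi.single i.1 1) (fun i => Pi.single i.1 (sign i.2.2))
    (fun i => sign i.2.2 * sqInterpCoeff (-2) (4 / m) i.2.1 / 4)
    (fun i => -(-2 + (i.2.1 : ℕ) * (4 / m))) (by norm_num) ?_ ?_ ?_ ?_ ?_
  · intro i j; rw [Pi.single_apply]; split_ifs <;> norm_num
  · intro i j; rw [Pi.single_apply]; split_ifs <;> simp [hsign]
  · intro i
    rw [abs_div, abs_mul, hsign, one_mul, abs_of_pos (by norm_num : (0 : ℝ) < 4)]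
    linarith [abs_sqInterpCoeff_le hm i.2.1]
  · intro i; rw [abs_neg]; exact (abs_knot_le i.2.1.is_lt).trans (by norm_num)
  · intro x x'
    simp only [innerApprox, sqApprox, sqInterpRelu, Fintype.sum_prod_type]
    refine sum_congr rfl fun j _ => ?_
    simp only [Pi.single_apply, ite_mul, one_mul, zero_mul, sum_ite_eq', mem_univ, if_true,
      Fin.sum_univ_two, ← Fin.sum_univ_eq_sum_range, sum_div, ← sum_sub_distrib]
    refine sum_congr rfl fun k _ => ?_
    simp only [sign, Matrix.cons_val_zero, Matrix.cons_val_one]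
    ring_nf

theorem depth_two_approximates_inner_product_general
    (d : ℕ) (δ : ℝ) (hδ : 0 < δ) :
    ∃ (r : ℕ) (N : Sph d → Sph d → ℝ), (r : ℝ) ≤ 8 * d ^ 2 / δ ∧
      IsDepth2Net d r 4 (fun x => max 0 x) N ∧
      ∀ x x' : Sph d,
        |N x x' - ⟪(x : EuclideanSpace ℝ (Fin d)), (x' : EuclideanSpace ℝ (Fin d))⟫| ≤ δ := by
  by_cases hδ1 : 1 ≤ δ
  · refine ⟨0, fun _ _ => 0, by simp; positivity,
      ⟨0, 0, 0, 0, 0, by simp, by simp, by simp, by simp, by simp, by simp⟩, fun x x' => ?_⟩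
    rw [zero_sub, abs_neg]
    exact (abs_real_inner_le_norm _ _).trans (by simpa using hδ1)
  · set m := ⌈d / δ⌉₊ + 1
    have hm : 0 < m := Nat.succ_pos _
    have hm_ge : (d : ℝ) / δ ≤ m := (Nat.le_ceil _).trans (by simp [m])
    have hm_lt : (m : ℝ) < d / δ + 2 := by
      have := Nat.ceil_lt_add_one (div_nonneg d.cast_nonneg hδ.le)
      push_cast [m]
      linarith
    have hd_sq : (d : ℝ) ≤ d ^ 2 := by exact_mod_cast Nat.le_self_pow two_ne_zero d
    refine ⟨d * (m * 2), _, ?_, isDepth2Net_innerApprox d hm, fun x x' => ?_⟩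
    · have hmδ : (m : ℝ) * δ ≤ d + 2 * δ := by
        have := mul_le_mul_of_nonneg_right hm_lt.le hδ.le
        rwa [add_mul, div_mul_cancel₀ _ hδ.ne'] at this
      rw [le_div_iff₀ hδ]
      push_cast
      nlinarith [mul_le_mul_of_nonneg_left hmδ d.cast_nonneg]
    · refine (abs_innerApprox_sub_inner_le hm (by simp) (by simp)).trans ?_
      rw [Fintype.card_fin, div_le_iff₀ (by positivity)]
      rw [div_le_iff₀ hδ] at hm_ge
      have : (1 : ℝ) ≤ m := by exact_mod_cast hm
      nlinarith

/-- The inner product `⟨x,x'⟩` on `S^{d-1} × S^{d-1}` can be uniformly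
`δ`-approximated by a depth-2 ReLU network of width at most `8d²/δ` with weights bounded
by `4`. -/
theorem depth_two_approximates_inner_product
    (d : ℕ) (hd : 1 ≤ d) (δ : ℝ) (hδ : 0 < δ) :
    ∃ (r : ℕ) (N : Sph d → Sph d → ℝ), (r : ℝ) ≤ 8 * d ^ 2 / δ ∧
      IsDepth2Net d r 4 (fun x => max 0 x) N ∧
      ∀ x x' : Sph d,
        |N x x' - ⟪(x : EuclideanSpace ℝ (Fin d)), (x' : EuclideanSpace ℝ (Fin d))⟫| ≤ δ :=
  depth_two_approximates_inner_product_general d δ hδ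
end
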